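/- Let A be a Perron-like real m×m matrix with principal eigenvalue s, let ν be the cyclic order of GE_s(A), Π₁ the spectral projection onto GE_s(A), and d an integer with ν − 1 ≤ d ≤ m − 1. Define P(t) = Σ_{k=0}^d (−1)^k (t^k/k!) (A − sI)^k. Then there exist constants C, δ > 0 such that for every real m×m matrix V, writing Y = Π₁V and X̂(t) = e^{t(A−sI)}V, one has ‖P(t)·X̂(t) − Y‖ ≤ C·‖V‖·(1 + t^d)·e^{−δt} for all t ≥ 0. -/

import Mathlib

open Matrix

/-- Matrix exponential of a real square matrix. -/
noncomputable def mexp {m : ℕ} (M : Matrix (Fin m) (Fin m) ℝ) : Matrix (Fin m) (Fin m) ℝ :=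
  NormedSpace.exp M

/-- Frobenius norm of a real square matrix. -/
noncomputable def fnorm {m : ℕ} (M : Matrix (Fin m) (Fin m) ℝ) : ℝ :=
  Real.sqrt (∑ i, ∑ j, (M i j) ^ 2)

/-- Euclidean norm of a vector in ℝ^m. -/
noncomputable def vnorm {m : ℕ} (x : Fin m → ℝ) : ℝ :=
  Real.sqrt (∑ i, (x i) ^ 2)

/-- Frobenius inner product ⟨M, N⟩ = trace(Mᵀ N). -/
def finner {m : ℕ} (M N : Matrix (Fin m) (Fin m) ℝ) : ℝ :=
  ∑ i, ∑ j, M i j * N i j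

/-- The generalized eigenspace GE_s(A) = {x : (A - s•I)^k x = 0 for some k ≥ 1},
as a submodule of ℝ^m. -/
def GEsub {m : ℕ} (A : Matrix (Fin m) (Fin m) ℝ) (s : ℝ) : Submodule ℝ (Fin m → ℝ) where
  carrier := {x | ∃ k : ℕ, 1 ≤ k ∧ ((A - s • 1) ^ k).mulVec x = 0}
  zero_mem' := ⟨1, le_refl 1, Matrix.mulVec_zero _⟩
  add_mem' := by
    rintro a b ⟨k, hk, ha⟩ ⟨l, hl, hb⟩
    refine ⟨max k l, le_trans hk (le_max_left _ _), ?_⟩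
    have h1 : ((A - s • 1) ^ (max k l)).mulVec a = 0 := by
      have h : (A - s • 1) ^ (max k l) = (A - s • 1) ^ (max k l - k) * (A - s • 1) ^ k := by
        rw [← pow_add]; congr 1; omega
      rw [h, ← Matrix.mulVec_mulVec, ha, Matrix.mulVec_zero]
    have h2 : ((A - s • 1) ^ (max k l)).mulVec b = 0 := by
      have h : (A - s • 1) ^ (max k l) = (A - s • 1) ^ (max k l - l) * (A - s • 1) ^ l := by
        rw [← pow_add]; congr 1; omega
      rw [h, ← Matrix.mulVec_mulVec, hb, Matrix.mulVec_zero]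
    rw [Matrix.mulVec_add, h1, h2, add_zero]
  smul_mem' := by
    rintro c a ⟨k, hk, ha⟩
    exact ⟨k, hk, by rw [Matrix.mulVec_smul, ha, smul_zero]⟩

/-!
Write `B = A - sI`, `Q = I - Π₁` and `W = B - (B + I)Π₁`. Since `Π₁` commutes with `B` and
`B^ν Π₁ = 0` with `ν ≤ d + 1`, the Taylor polynomial `P(t)` of `e^{-tB}` agrees with `e^{-tB}` on
the range of `Π₁`, so `P(t) e^{tB} Π₁ = Π₁`; on the other hand `e^{tB} Q = e^{tW} Q`. Hence
`P(t) e^{tB} V - Π₁ V = P(t) e^{tW} Q V`, and `‖P(t)‖ = O(1 + t^d)`.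

The spectrum of `W` consists of `-1` and of eigenvalues `μ ≠ 0` of `B` (the eigenvalue `0` is
excluded because `ker B ⊆ GE_s(A) = range Π₁`), so by the Perron property it lies in the open left
half-plane. Then `e^{tW}` decays exponentially: on a generalized eigenspace of left multiplication
by `W` for the eigenvalue `μ`, `e^{tW}` acts as `e^{tμ}` times a polynomial in `t`.
-/

open NormedSpace Finset
open scoped Nat

theorem pow_le_one_add_pow {t : ℝ} (ht : 0 ≤ t) {k d : ℕ} (hkd : k ≤ d) : t ^ k ≤ 1 + t ^ d := by
  rcases le_total t 1 with h | h
  · linarith [pow_le_one₀ (n := k) ht h, pow_nonneg ht d]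
  · linarith [pow_le_pow_right₀ h hkd]

theorem pow_div_factorial_le_exp_mul {t ε : ℝ} (ht : 0 ≤ t) (hε : 0 < ε) (k : ℕ) :
    t ^ k / k ! ≤ ε⁻¹ ^ k * Real.exp (ε * t) := by
  have h := Real.pow_div_factorial_le_exp _ (mul_nonneg hε.le ht) k
  rw [mul_pow, mul_div_assoc] at h
  calc t ^ k / k ! = ε⁻¹ ^ k * (ε ^ k * (t ^ k / k !)) := by
        rw [← mul_assoc, ← mul_pow, inv_mul_cancel₀ hε.ne', one_pow, one_mul]
    _ ≤ ε⁻¹ ^ k * Real.exp (ε * t) := by gcongr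

section Idempotent

variable {R : Type*} [Ring R] {p : R}

theorem IsIdempotentElem.mul_one_sub_add_mul_mul_eq_one (hp : IsIdempotentElem p) {u v c d : R}
    (huv : u * v = 1) (hcd : c * d = 1) (hv : Commute v p) (hd : Commute d p) :
    (u * (1 - p) + c * p) * (v * (1 - p) + d * p) = 1 := by
  have hpq : p * (1 - p) = 0 := by rw [mul_sub, mul_one, hp.eq, sub_self]
  have hqp : (1 - p) * p = 0 := by rw [sub_mul, one_mul, hp.eq, sub_self]
  calc (u * (1 - p) + c * p) * (v * (1 - p) + d * p)
      = u * ((1 - p) * v) * (1 - p) + u * ((1 - p) * d) * p + c * (p * v) * (1 - p)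
          + c * (p * d) * p := by noncomm_ring
    _ = u * v * ((1 - p) * (1 - p)) + u * d * ((1 - p) * p) + c * v * (p * (1 - p))
          + c * d * (p * p) := by
        rw [← ((Commute.one_right v).sub_right hv).eq, ← ((Commute.one_right d).sub_right hd).eq,
          ← hv.eq, ← hd.eq]
        noncomm_ring
    _ = 1 := by rw [huv, hcd, hp.one_sub.eq, hp.eq, hpq, hqp]; noncomm_ring

theorem IsIdempotentElem.isUnit_mul_one_sub_add_mul (hp : IsIdempotentElem p) {u c : R}
    (hu : IsUnit u) (hc : IsUnit c) (hup : Commute u p) (hcp : Commute c p) :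
    IsUnit (u * (1 - p) + c * p) := by
  obtain ⟨U, rfl⟩ := hu
  obtain ⟨C, rfl⟩ := hc
  exact ⟨⟨_, _, hp.mul_one_sub_add_mul_mul_eq_one U.mul_inv C.mul_inv hup.units_inv_left
    hcp.units_inv_left, hp.mul_one_sub_add_mul_mul_eq_one U.inv_mul C.inv_mul hup hcp⟩, rfl⟩

theorem spectrum_sub_add_one_mul_subset {𝕜 : Type*} [Field 𝕜] [Algebra 𝕜 R] {b : R}
    (hp : IsIdempotentElem p) (hbp : Commute b p) :
    spectrum 𝕜 (b - (b + 1) * p) ⊆ insert (-1) (spectrum 𝕜 b) := by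
  intro μ hμ
  by_contra hne
  rw [Set.mem_insert_iff, not_or, ← add_eq_zero_iff_eq_neg, spectrum.notMem_iff] at hne
  refine spectrum.notMem_iff.mpr ?_ hμ
  have hdecomp : algebraMap 𝕜 R μ - (b - (b + 1) * p) =
      (algebraMap 𝕜 R μ - b) * (1 - p) + algebraMap 𝕜 R (μ + 1) * p := by
    rw [map_add, map_one]; noncomm_ring
  rw [hdecomp]
  exact hp.isUnit_mul_one_sub_add_mul hne.2 ((Ne.isUnit hne.1).map _)
    ((Algebra.commute_algebraMap_left μ p).sub_left hbp) (Algebra.commute_algebraMap_left _ p)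

end Idempotent

theorem exp_mul_eq_sum_of_pow_mul_eq_zero (𝕂 : Type*) {𝔸 : Type*} [RCLike 𝕂] [NormedRing 𝔸]
    [NormedAlgebra 𝕂 𝔸] [CompleteSpace 𝔸] {x y : 𝔸} {K : ℕ} (h : x ^ K * y = 0) :
    exp x * y = ∑ k ∈ range K, ((k ! : 𝕂)⁻¹ • x ^ k) * y := by
  rw [exp_eq_tsum 𝕂, ← ((expSeries_summable' (𝕂 := 𝕂) x).hasSum.mul_right y).tsum_eq]
  refine tsum_eq_sum fun n hn => ?_
  rw [smul_mul_assoc, ← Nat.sub_add_cancel (not_lt.mp (mem_range.not.mp hn)), pow_add,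
    mul_assoc, h, mul_zero, smul_zero]

section RealBanachAlgebra

variable {𝔸 : Type*} [NormedRing 𝔸] [NormedAlgebra ℝ 𝔸]

noncomputable def taylorExpNeg (d : ℕ) (t : ℝ) (b : 𝔸) : 𝔸 :=
  ∑ k ∈ range (d + 1), ((-1 : ℝ) ^ k * t ^ k / (k ! : ℝ)) • b ^ k

theorem taylorExpNeg_eq (d : ℕ) (t : ℝ) (b : 𝔸) :
    taylorExpNeg d t b = ∑ k ∈ range (d + 1), (k ! : ℝ)⁻¹ • (-t • b) ^ k := by
  refine sum_congr rfl fun k _ => ?_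
  rw [smul_pow, smul_smul, neg_pow]
  ring_nf

theorem commute_taylorExpNeg (d : ℕ) (t : ℝ) (b : 𝔸) : Commute (taylorExpNeg d t b) b :=
  Commute.sum_left _ _ _ fun k _ => ((Commute.refl b).pow_left k).smul_left _

theorem norm_taylorExpNeg_le (d : ℕ) {t : ℝ} (ht : 0 ≤ t) (b : 𝔸) :
    ‖taylorExpNeg d t b‖ ≤ (1 + t ^ d) * ∑ k ∈ range (d + 1), ‖b ^ k‖ / (k ! : ℝ) := by
  refine (norm_sum_le _ _).trans ?_
  rw [mul_sum]
  refine sum_le_sum fun k hk => ?_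
  rw [norm_smul, norm_div, norm_mul, norm_pow, norm_neg, norm_one, one_pow, one_mul, norm_pow,
    Real.norm_of_nonneg ht, RCLike.norm_natCast, div_mul_eq_mul_div, mul_div_assoc]
  gcongr
  exact pow_le_one_add_pow ht (Nat.lt_succ_iff.mp (mem_range.mp hk))

variable [CompleteSpace 𝔸]

theorem exp_mul_eq_of_mul_eq_zero {x y : 𝔸} (h : x * y = 0) : exp x * y = y := by
  simpa using exp_mul_eq_sum_of_pow_mul_eq_zero ℝ (K := 1) (x := x) (y := y) (by rwa [pow_one])

theorem exp_mul_exp_neg (x : 𝔸) : exp x * exp (-x) = 1 := by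
  let +nondep : NormedAlgebra ℚ 𝔸 := NormedAlgebra.restrictScalars ℚ ℝ 𝔸
  rw [← NormedSpace.exp_add_of_commute (Commute.refl x).neg_right, add_neg_cancel, exp_zero]

theorem taylorExpNeg_mul_exp_mul_eq {b p : 𝔸} {d : ℕ} (h : b ^ (d + 1) * p = 0) (t : ℝ) :
    taylorExpNeg d t b * exp (t • b) * p = p := by
  have hexp : exp (-(t • b)) * p = taylorExpNeg d t b * p := by
    rw [exp_mul_eq_sum_of_pow_mul_eq_zero ℝ (K := d + 1), taylorExpNeg_eq, sum_mul, neg_smul]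
    rw [neg_pow, smul_pow, mul_assoc, smul_mul_assoc, h]
    simp
  rw [((commute_taylorExpNeg d t b).smul_right t).exp_right.eq, mul_assoc, ← hexp, ← mul_assoc,
    exp_mul_exp_neg, one_mul]

theorem exp_smul_mul_one_sub_eq {b p : 𝔸} (hp : IsIdempotentElem p) (hbp : Commute b p)
    (t : ℝ) : exp (t • b) * (1 - p) = exp (t • (b - (b + 1) * p)) * (1 - p) := by
  let +nondep : NormedAlgebra ℚ 𝔸 := NormedAlgebra.restrictScalars ℚ ℝ 𝔸
  have hc : Commute b ((b + 1) * p) :=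
    ((Commute.refl b).add_right (Commute.one_right b)).mul_right hbp
  have hsplit : t • b = t • (b - (b + 1) * p) + t • ((b + 1) * p) := by
    rw [← smul_add, sub_add_cancel]
  have hkill : t • ((b + 1) * p) * (1 - p) = 0 := by
    rw [smul_mul_assoc, mul_assoc, mul_sub, mul_one, hp.eq, sub_self, mul_zero, smul_zero]
  have hcomm : Commute (t • (b - (b + 1) * p)) (t • ((b + 1) * p)) :=
    ((hc.sub_left (Commute.refl _)).smul_left t).smul_right t
  rw [hsplit, NormedSpace.exp_add_of_commute hcomm, mul_assoc, exp_mul_eq_of_mul_eq_zero hkill]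

theorem taylorExpNeg_mul_exp_sub_eq {b p : 𝔸} (hp : IsIdempotentElem p) (hbp : Commute b p)
    {d : ℕ} (h : b ^ (d + 1) * p = 0) (t : ℝ) :
    taylorExpNeg d t b * exp (t • b) - p =
      taylorExpNeg d t b * exp (t • (b - (b + 1) * p)) * (1 - p) := by
  rw [mul_assoc, ← exp_smul_mul_one_sub_eq hp hbp, mul_sub, mul_one, mul_sub, ← mul_assoc,
    taylorExpNeg_mul_exp_mul_eq h]

theorem exists_norm_taylorExpNeg_mul_exp_mul_sub_le {b p : 𝔸} (hp : IsIdempotentElem p)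
    (hbp : Commute b p) {d : ℕ} (h : b ^ (d + 1) * p = 0) {C δ : ℝ}
    (hdecay : ∀ t : ℝ, 0 ≤ t → ‖exp (t • (b - (b + 1) * p))‖ ≤ C * Real.exp (-δ * t)) :
    ∃ C' : ℝ, 0 < C' ∧ ∀ v : 𝔸, ∀ t : ℝ, 0 ≤ t →
      ‖taylorExpNeg d t b * (exp (t • b) * v) - p * v‖
        ≤ C' * ‖v‖ * (1 + t ^ d) * Real.exp (-δ * t) := by
  set K := ∑ k ∈ range (d + 1), ‖b ^ k‖ / (k ! : ℝ)
  have hK : 0 ≤ K := sum_nonneg fun k _ => by positivity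
  have hC : 0 ≤ C := by simpa using (norm_nonneg _).trans (hdecay 0 le_rfl)
  refine ⟨K * C * ‖1 - p‖ + 1, by positivity, fun v t ht => ?_⟩
  rw [← mul_assoc, ← sub_mul, taylorExpNeg_mul_exp_sub_eq hp hbp h]
  calc ‖taylorExpNeg d t b * exp (t • (b - (b + 1) * p)) * (1 - p) * v‖
      ≤ ‖taylorExpNeg d t b‖ * ‖exp (t • (b - (b + 1) * p))‖ * ‖1 - p‖ * ‖v‖ :=
        (norm_mul_le _ _).trans (mul_le_mul_of_nonneg_right norm_mul₃_le (norm_nonneg _))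
    _ ≤ (1 + t ^ d) * K * (C * Real.exp (-δ * t)) * ‖1 - p‖ * ‖v‖ := by
        gcongr
        · exact norm_taylorExpNeg_le d ht b
        · exact hdecay t ht
    _ ≤ (K * C * ‖1 - p‖ + 1) * ‖v‖ * (1 + t ^ d) * Real.exp (-δ * t) := by
        have : 0 ≤ ‖v‖ * (1 + t ^ d) * Real.exp (-δ * t) := by positivity
        nlinarith

end RealBanachAlgebra

section ComplexBanachAlgebra

variable {𝔸 : Type*} [NormedRing 𝔸] [NormedAlgebra ℂ 𝔸] [CompleteSpace 𝔸]

theorem norm_exp_smul_mul_le_of_pow_mul_eq_zero {a M : 𝔸} {μ : ℂ} {K : ℕ}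
    (h : (a - algebraMap ℂ 𝔸 μ) ^ K * M = 0) {ε t : ℝ} (hε : 0 < ε) (ht : 0 ≤ t) :
    ‖exp ((t : ℂ) • a) * M‖ ≤
      (∑ k ∈ range K, ε⁻¹ ^ k * ‖(a - algebraMap ℂ 𝔸 μ) ^ k * M‖) *
        Real.exp ((μ.re + ε) * t) := by
  let +nondep : NormedAlgebra ℚ 𝔸 := NormedAlgebra.restrictScalars ℚ ℂ 𝔸
  set n := a - algebraMap ℂ 𝔸 μ
  have hsplit : (t : ℂ) • a = algebraMap ℂ 𝔸 (t * μ) + (t : ℂ) • n := by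
    rw [smul_sub, map_mul, ← Algebra.smul_def]
    abel
  have hnil : ((t : ℂ) • n) ^ K * M = 0 := by rw [smul_pow, smul_mul_assoc, h, smul_zero]
  rw [hsplit, NormedSpace.exp_add_of_commute (Algebra.commutes _ _), ← algebraMap_exp_comm, mul_assoc,
    exp_mul_eq_sum_of_pow_mul_eq_zero ℂ hnil, ← Algebra.smul_def, norm_smul,
    ← Complex.exp_eq_exp_ℂ, Complex.norm_exp]
  have hterm : ∀ k, ‖((k ! : ℂ)⁻¹ • ((t : ℂ) • n) ^ k) * M‖ ≤
      ε⁻¹ ^ k * ‖n ^ k * M‖ * Real.exp (ε * t) := fun k => by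
    rw [smul_pow, smul_mul_assoc, smul_mul_assoc, smul_smul, norm_smul, norm_mul, norm_inv,
      norm_pow, Complex.norm_natCast, Complex.norm_real, Real.norm_of_nonneg ht,
      inv_mul_eq_div, mul_right_comm]
    gcongr
    exact pow_div_factorial_le_exp_mul ht hε k
  calc Real.exp ((t * μ : ℂ).re) * ‖∑ k ∈ range K, ((k ! : ℂ)⁻¹ • ((t : ℂ) • n) ^ k) * M‖
      ≤ Real.exp (μ.re * t) * ∑ k ∈ range K, ε⁻¹ ^ k * ‖n ^ k * M‖ * Real.exp (ε * t) := by
        rw [Complex.re_ofReal_mul, mul_comm t]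
        gcongr
        exact (norm_sum_le _ _).trans (sum_le_sum fun k _ => hterm k)
    _ = (∑ k ∈ range K, ε⁻¹ ^ k * ‖n ^ k * M‖) * Real.exp ((μ.re + ε) * t) := by
        rw [← sum_mul, add_mul, Real.exp_add]
        ring

variable (𝔸) in
def expDecaySubmodule (a : 𝔸) (δ : ℝ) : Submodule ℂ 𝔸 where
  carrier := {M | ∃ C : ℝ, ∀ t : ℝ, 0 ≤ t → ‖exp ((t : ℂ) • a) * M‖ ≤ C * Real.exp (-δ * t)}
  zero_mem' := ⟨0, fun t _ => by simp⟩
  add_mem' := by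
    rintro M N ⟨C, hC⟩ ⟨D, hD⟩
    refine ⟨C + D, fun t ht => ?_⟩
    rw [mul_add, add_mul]
    exact (norm_add_le _ _).trans (add_le_add (hC t ht) (hD t ht))
  smul_mem' := by
    rintro c M ⟨C, hC⟩
    refine ⟨‖c‖ * C, fun t ht => ?_⟩
    rw [mul_smul_comm, norm_smul, mul_assoc]
    exact mul_le_mul_of_nonneg_left (hC t ht) (norm_nonneg c)

theorem maxGenEigenspace_le_expDecaySubmodule {a : 𝔸} {μ : ℂ} {δ : ℝ} (hμ : μ.re + δ < 0) :
    (Algebra.lmul ℂ 𝔸 a).maxGenEigenspace μ ≤ expDecaySubmodule 𝔸 a δ := by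
  intro M hM
  obtain ⟨K, hK⟩ := (Module.End.mem_maxGenEigenspace _ _ _).mp hM
  have hlmul : Algebra.lmul ℂ 𝔸 a - μ • 1 = Algebra.lmul ℂ 𝔸 (a - algebraMap ℂ 𝔸 μ) := by
    rw [map_sub, Algebra.algebraMap_eq_smul_one, map_smul, map_one]
  rw [hlmul, ← map_pow, Algebra.coe_lmul_eq_mul, LinearMap.mul_apply'] at hK
  refine ⟨∑ k ∈ range K, (-(μ.re + δ))⁻¹ ^ k * ‖(a - algebraMap ℂ 𝔸 μ) ^ k * M‖,
    fun t ht => ?_⟩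
  convert norm_exp_smul_mul_le_of_pow_mul_eq_zero hK (neg_pos.mpr hμ) ht using 3
  ring

end ComplexBanachAlgebra

theorem exists_norm_exp_smul_le_of_re_lt_zero {𝔸 : Type*} [NormedRing 𝔸] [NormedAlgebra ℂ 𝔸]
    [FiniteDimensional ℂ 𝔸] {a : 𝔸} (ha : ∀ μ ∈ spectrum ℂ a, μ.re < 0) :
    ∃ C δ : ℝ, 0 < δ ∧ ∀ t : ℝ, 0 ≤ t → ‖exp ((t : ℂ) • a)‖ ≤ C * Real.exp (-δ * t) := by
  have := FiniteDimensional.complete ℂ 𝔸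
  set L := Algebra.lmul ℂ 𝔸 a
  have hL : ∀ μ ∈ spectrum ℂ L, ∀ᶠ δ in nhdsWithin (0 : ℝ) (Set.Ioi 0), μ.re + δ < 0 :=
    fun μ hμ => Filter.mem_of_superset (Ioo_mem_nhdsGT (neg_pos.mpr
      (ha μ (AlgHom.spectrum_apply_subset _ _ hμ)))) fun δ hδ => show μ.re + δ < 0 by
        linarith [hδ.2]
  obtain ⟨δ, hδ, hδpos⟩ :=
    (((Filter.eventually_all_finite (Module.End.finite_spectrum L)).mpr hL).and
      self_mem_nhdsWithin).exists
  have htop : expDecaySubmodule 𝔸 a δ = ⊤ := by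
    rw [eq_top_iff, ← Module.End.iSup_maxGenEigenspace_eq_top L]
    refine iSup_le fun μ => ?_
    by_cases hbot : L.maxGenEigenspace μ = ⊥
    · rw [hbot]; exact bot_le
    · exact maxGenEigenspace_le_expDecaySubmodule (hδ μ
        (Module.End.HasUnifEigenvalue.lt zero_lt_one hbot).mem_spectrum)
  obtain ⟨C, hC⟩ : (1 : 𝔸) ∈ expDecaySubmodule 𝔸 a δ := htop ▸ Submodule.mem_top
  exact ⟨C, δ, hδpos, fun t ht => by simpa using hC t ht⟩

section Matrix

open scoped Matrix.Norms.Frobenius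

variable {n : Type*} [Fintype n] [DecidableEq n]

theorem Matrix.exists_norm_exp_smul_le_of_re_lt_zero (W : Matrix n n ℝ)
    (hW : ∀ μ ∈ spectrum ℂ (W.map Complex.ofReal), μ.re < 0) :
    ∃ C δ : ℝ, 0 < δ ∧ ∀ t : ℝ, 0 ≤ t → ‖exp (t • W)‖ ≤ C * Real.exp (-δ * t) := by
  obtain ⟨C, δ, hδ, h⟩ := _root_.exists_norm_exp_smul_le_of_re_lt_zero hW
  refine ⟨C, δ, hδ, fun t ht => ?_⟩
  have hcont : Continuous (Complex.ofRealHom.mapMatrix : Matrix n n ℝ →+* Matrix n n ℂ) :=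
    continuous_id.matrix_map Complex.continuous_ofReal
  have hmap : (exp (t • W)).map Complex.ofReal = exp ((t : ℂ) • W.map Complex.ofReal) := by
    refine (map_exp _ hcont (t • W)).trans (congrArg exp ?_)
    ext i j
    simp
  rw [← frobenius_norm_map_eq _ Complex.ofReal Complex.norm_real, hmap]
  exact h t ht

theorem Matrix.re_lt_zero_of_mem_spectrum_sub_add_one_mul {A P : Matrix n n ℝ} {s : ℝ}
    (hperron : ∀ μ ∈ spectrum ℂ (A.map Complex.ofReal), μ ≠ (s : ℂ) → μ.re < s)
    (hP : IsIdempotentElem P) (hBP : Commute (A - s • 1) P)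
    (hker : ∀ x, (A - s • 1) *ᵥ x = 0 → P *ᵥ x = x) :
    ∀ μ ∈ spectrum ℂ ((A - s • 1 - (A - s • 1 + 1) * P).map Complex.ofReal), μ.re < 0 := by
  set B := A - s • 1
  have hPW : P * (B - (B + 1) * P) = -P := by
    rw [mul_sub, ← mul_assoc, ← (hBP.add_left (Commute.one_left P)).eq, mul_assoc, hP.eq,
      add_mul, one_mul, hBP.eq]
    abel
  have hunit : IsUnit (B - (B + 1) * P) := by
    refine mulVec_injective_iff_isUnit.mp
      ((injective_iff_map_eq_zero (B - (B + 1) * P).mulVecLin).mpr fun x hx => ?_)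
    replace hx : (B - (B + 1) * P) *ᵥ x = 0 := hx
    have hPx : P *ᵥ x = 0 := by simpa [hPW, neg_mulVec] using congrArg (P *ᵥ ·) hx
    have hBx : B *ᵥ x = 0 := by simpa [sub_mulVec, ← mulVec_mulVec, hPx] using hx
    rw [← hker x hBx, hPx]
  let toC := (Complex.ofRealHom.mapMatrix : Matrix n n ℝ →+* Matrix n n ℂ)
  have htoCB : toC B = A.map Complex.ofReal - algebraMap ℂ _ (s : ℂ) := by
    ext i j
    by_cases hij : i = j <;> simp [B, toC, hij, Matrix.algebraMap_eq_diagonal]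
  intro μ hμ
  change μ ∈ spectrum ℂ (toC (B - (B + 1) * P)) at hμ
  rw [map_sub, map_mul, map_add, map_one] at hμ
  rcases spectrum_sub_add_one_mul_subset (hP.map toC) (hBP.map toC) hμ with rfl | hμB
  · norm_num
  · rw [htoCB, ← spectrum.sub_singleton_eq] at hμB
    obtain ⟨ν, hν, _, rfl, rfl⟩ := hμB
    have hνs : ν ≠ s := by
      rintro rfl
      refine (spectrum.zero_mem_iff ℂ).mp ?_ (hunit.map toC)
      rwa [map_sub, map_mul, map_add, map_one, ← sub_self (s : ℂ)]
    simpa using hperron ν hν hνs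

theorem fnorm_eq_norm {m : ℕ} (M : Matrix (Fin m) (Fin m) ℝ) : fnorm M = ‖M‖ := by
  simp [fnorm, Matrix.frobenius_norm_def, Real.sqrt_eq_rpow]

theorem exists_fnorm_taylorExpNeg_mul_mexp_mul_sub_le {m : ℕ} {B P : Matrix (Fin m) (Fin m) ℝ}
    (hP : IsIdempotentElem P) (hBP : Commute B P) {d : ℕ} (h : B ^ (d + 1) * P = 0)
    (hspec : ∀ μ ∈ spectrum ℂ ((B - (B + 1) * P).map Complex.ofReal), μ.re < 0) :
    ∃ C : ℝ, 0 < C ∧ ∃ δ : ℝ, 0 < δ ∧ ∀ V : Matrix (Fin m) (Fin m) ℝ, ∀ t : ℝ, 0 ≤ t →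
      fnorm (taylorExpNeg d t B * (mexp (t • B) * V) - P * V)
        ≤ C * fnorm V * (1 + t ^ d) * Real.exp (-δ * t) := by
  obtain ⟨C, δ, hδ, hdecay⟩ := Matrix.exists_norm_exp_smul_le_of_re_lt_zero _ hspec
  obtain ⟨C', hC', hbound⟩ := exists_norm_taylorExpNeg_mul_exp_mul_sub_le hP hBP h hdecay
  refine ⟨C', hC', δ, hδ, fun V t ht => ?_⟩
  rw [fnorm_eq_norm, fnorm_eq_norm]
  exact hbound V t ht

end Matrix

theorem stmt17_general {m : ℕ} (A : Matrix (Fin m) (Fin m) ℝ) (s : ℝ)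
    (hperron : ∀ μ ∈ spectrum ℂ (A.map Complex.ofReal), μ ≠ (s : ℂ) → μ.re < s)
    (ν : ℕ)
    (hann : ∀ x ∈ GEsub A s, ((A - s • 1) ^ ν).mulVec x = 0)
    (P : Matrix (Fin m) (Fin m) ℝ)
    (hPidem : P * P = P) (hPcomm : P * A = A * P)
    (hPrange : Set.range P.mulVec = (GEsub A s : Set (Fin m → ℝ)))
    (d : ℕ) (hd1 : ν - 1 ≤ d) :
    ∃ C : ℝ, 0 < C ∧ ∃ δ : ℝ, 0 < δ ∧
      ∀ V : Matrix (Fin m) (Fin m) ℝ, ∀ t : ℝ, 0 ≤ t →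
        fnorm ((∑ k ∈ Finset.range (d + 1),
              ((-1 : ℝ) ^ k * t ^ k / (Nat.factorial k : ℝ)) • (A - s • 1) ^ k) *
            (mexp (t • (A - s • 1)) * V) - P * V)
          ≤ C * fnorm V * (1 + t ^ d) * Real.exp (-δ * t) := by
  have hP : IsIdempotentElem P := hPidem
  have hBP : Commute (A - s • 1) P :=
    Commute.sub_left hPcomm.symm ((Commute.one_left P).smul_left s)
  have hnil : (A - s • 1) ^ (d + 1) * P = 0 := by
    have h : (A - s • 1) ^ ν * P = 0 := Matrix.ext_iff_mulVec.mpr fun x => by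
      rw [← mulVec_mulVec, zero_mulVec]
      exact hann _ (by rw [← SetLike.mem_coe, ← hPrange]; exact ⟨x, rfl⟩)
    rw [← Nat.sub_add_cancel (show ν ≤ d + 1 by omega), pow_add, mul_assoc, h, mul_zero]
  have hker : ∀ x, (A - s • 1) *ᵥ x = 0 → P *ᵥ x = x := fun x hx => by
    obtain ⟨y, rfl⟩ : x ∈ Set.range P.mulVec := hPrange ▸ ⟨1, le_rfl, by rwa [pow_one]⟩
    rw [mulVec_mulVec, hPidem]
  exact exists_fnorm_taylorExpNeg_mul_mexp_mul_sub_le hP hBP hnil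
    (Matrix.re_lt_zero_of_mem_spectrum_sub_add_one_mul hperron hP hBP hker)

/-- For Perron-like A (principal eigenvalue s, cyclic order ν, spectral
projection P onto GE_s(A)) and ν − 1 ≤ d ≤ m − 1, with
P(t) = ∑_{k=0}^d (−1)^k (t^k/k!)(A−sI)^k, there are C, δ > 0 such that for every V and t ≥ 0,
‖P(t)e^{t(A−sI)}V − PV‖ ≤ C‖V‖(1 + t^d)e^{−δt}. -/
theorem stmt17 {m : ℕ} (A : Matrix (Fin m) (Fin m) ℝ) (s : ℝ)
    (hs : s ∈ spectrum ℝ A)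
    (hperron : ∀ μ ∈ spectrum ℂ (A.map Complex.ofReal), μ ≠ (s : ℂ) → μ.re < s)
    (ν : ℕ) (hν : 0 < ν)
    (hann : ∀ x ∈ GEsub A s, ((A - s • 1) ^ ν).mulVec x = 0)
    (hmin : ∀ k : ℕ, 0 < k → (∀ x ∈ GEsub A s, ((A - s • 1) ^ k).mulVec x = 0) → ν ≤ k)
    (P : Matrix (Fin m) (Fin m) ℝ)
    (hPidem : P * P = P) (hPcomm : P * A = A * P)
    (hPrange : Set.range P.mulVec = (GEsub A s : Set (Fin m → ℝ)))
    (d : ℕ) (hd1 : ν - 1 ≤ d) (hd2 : d ≤ m - 1) :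
    ∃ C : ℝ, 0 < C ∧ ∃ δ : ℝ, 0 < δ ∧
      ∀ V : Matrix (Fin m) (Fin m) ℝ, ∀ t : ℝ, 0 ≤ t →
        fnorm ((∑ k ∈ Finset.range (d + 1),
              ((-1 : ℝ) ^ k * t ^ k / (Nat.factorial k : ℝ)) • (A - s • 1) ^ k) *
            (mexp (t • (A - s • 1)) * V) - P * V)
          ≤ C * fnorm V * (1 + t ^ d) * Real.exp (-δ * t) :=
  stmt17_general A s hperron ν hann P hPidem hPcomm hPrange d hd1
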